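/- For every y ≥ 1, one has ϑ₂(y) < 2 e^{−πy/4} + 2 · (1 + 0.00001) e^{−9πy/4}. -/

import Mathlib

/-!
Pairing `n` with `-n - 1` gives `ϑ₂(y) = 2 ∑_{n ≥ 0} e^{-πy(n+1/2)²}`. The terms `n = 0, 1` are
the main terms. Since `(n + 5/2)² = 9/4 + (n + 1)(n + 4) ≥ 9/4 + 4(n + 1)`, the remaining tail is
dominated by a geometric series and is at most `e^{-9πy/4} / (e^{4πy} - 1)`; for `y ≥ 1` one has
`e^{4πy} ≥ e^{12} > 10⁵ + 1`.
-/

/-- The Jacobi theta function ϑ₂, defined for real `y` by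
`ϑ₂(y) = ∑_{n ∈ ℤ} e^{−π y (n + 1/2)²}`. -/
noncomputable def theta2 (y : ℝ) : ℝ :=
  ∑' n : ℤ, Real.exp (-Real.pi * y * ((n : ℝ) + 1/2) ^ 2)

open Real

lemma tsum_int_eq_two_mul_tsum_nat {f : ℤ → ℝ} (hf : Summable fun n : ℕ ↦ f n)
    (hsymm : ∀ n : ℕ, f (-(n + 1)) = f n) :
    ∑' n : ℤ, f n = 2 * ∑' n : ℕ, f n := by
  rw [tsum_of_nat_of_neg_add_one hf (by simpa only [hsymm] using hf)]
  simp only [hsymm]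
  ring

lemma summable_exp_neg_mul_add_half_sq {c : ℝ} (hc : 0 < c) :
    Summable fun n : ℕ ↦ exp (-c * (n + 1 / 2) ^ 2) := by
  refine .of_nonneg_of_le (fun n ↦ (exp_pos _).le) (fun n ↦ ?_)
    (summable_geometric_of_lt_one (exp_pos (-c)).le (exp_lt_one_iff.mpr (by linarith)))
  rw [← exp_nat_mul, exp_le_exp]
  nlinarith [sq_nonneg ((n : ℝ) - 1 / 2)]

lemma theta2_eq_two_mul_tsum {y : ℝ} (hy : 0 < y) :
    theta2 y = 2 * ∑' n : ℕ, exp (-(π * y) * (n + 1 / 2) ^ 2) := by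
  rw [theta2, tsum_int_eq_two_mul_tsum_nat]
  · simp only [Int.cast_natCast, neg_mul, mul_assoc]
  · simpa only [Int.cast_natCast, neg_mul, mul_assoc] using
      summable_exp_neg_mul_add_half_sq (mul_pos pi_pos hy)
  · intro n
    push_cast
    ring_nf

lemma exp_neg_mul_add_half_sq_nat_add_two_le {c : ℝ} (hc : 0 ≤ c) (n : ℕ) :
    exp (-c * ((n + 2 : ℕ) + 1 / 2) ^ 2) ≤
      exp (-9 * c / 4) * exp (-(4 * c)) * exp (-(4 * c)) ^ n := by
  rw [← exp_nat_mul, ← exp_add, ← exp_add, exp_le_exp]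
  push_cast
  nlinarith [mul_nonneg hc (sq_nonneg (n : ℝ))]

lemma tsum_exp_neg_mul_add_half_sq_nat_add_two_le {c : ℝ} (hc : 0 < c) :
    ∑' n : ℕ, exp (-c * ((n + 2 : ℕ) + 1 / 2) ^ 2) ≤ exp (-9 * c / 4) * (exp (4 * c) - 1)⁻¹ := by
  have hr : exp (-(4 * c)) < 1 := exp_lt_one_iff.mpr (by linarith)
  have hgeom := summable_geometric_of_lt_one (exp_pos (-(4 * c))).le hr
  calc ∑' n : ℕ, exp (-c * ((n + 2 : ℕ) + 1 / 2) ^ 2)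
      ≤ ∑' n : ℕ, exp (-9 * c / 4) * exp (-(4 * c)) * exp (-(4 * c)) ^ n :=
        Summable.tsum_le_tsum (exp_neg_mul_add_half_sq_nat_add_two_le hc.le)
          ((summable_nat_add_iff 2).mpr (summable_exp_neg_mul_add_half_sq hc)) (hgeom.mul_left _)
    _ = exp (-9 * c / 4) * (exp (-(4 * c)) * (1 - exp (-(4 * c)))⁻¹) := by
        rw [tsum_mul_left, tsum_geometric_of_lt_one (exp_pos _).le hr, mul_assoc]
    _ = exp (-9 * c / 4) * (exp (4 * c) - 1)⁻¹ := by
        have he : 1 < exp (4 * c) := one_lt_exp_iff.mpr (by linarith)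
        rw [exp_neg]
        field_simp

lemma inv_exp_sub_one_lt {t : ℝ} (ht : 12 ≤ t) : (exp t - 1)⁻¹ < 0.00001 := by
  have h12 : (100001 : ℝ) < exp t :=
    calc (100001 : ℝ) < 2.7182818283 ^ 12 := by norm_num
      _ < exp 1 ^ 12 := by gcongr; exact exp_one_gt_d9
      _ = exp 12 := by rw [← exp_nat_mul]; norm_num
      _ ≤ exp t := exp_le_exp.mpr ht
  rw [inv_lt_comm₀ (by linarith) (by norm_num)]
  linarith [show (0.00001 : ℝ)⁻¹ = 100000 by norm_num]

theorem theta2_upper_bound (y : ℝ) (hy : 1 ≤ y) :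
    theta2 y < 2 * Real.exp (-Real.pi * y / 4) +
      2 * (1 + 0.00001) * Real.exp (-9 * Real.pi * y / 4) := by
  have hc : 3 ≤ π * y := by nlinarith [pi_gt_three]
  have htail : ∑' n : ℕ, exp (-(π * y) * ((n + 2 : ℕ) + 1 / 2) ^ 2) <
      0.00001 * exp (-9 * π * y / 4) :=
    calc _ ≤ exp (-9 * (π * y) / 4) * (exp (4 * (π * y)) - 1)⁻¹ :=
          tsum_exp_neg_mul_add_half_sq_nat_add_two_le (by linarith)
      _ < exp (-9 * (π * y) / 4) * 0.00001 :=
          mul_lt_mul_of_pos_left (inv_exp_sub_one_lt (by linarith)) (exp_pos _)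
      _ = 0.00001 * exp (-9 * π * y / 4) := by ring_nf
  have hterm₀ : exp (-(π * y) * ((0 : ℕ) + 1 / 2) ^ 2) = exp (-π * y / 4) := by
    congr 1; push_cast; ring
  have hterm₁ : exp (-(π * y) * ((1 : ℕ) + 1 / 2) ^ 2) = exp (-9 * π * y / 4) := by
    congr 1; push_cast; ring
  rw [theta2_eq_two_mul_tsum (by linarith),
    ← (summable_exp_neg_mul_add_half_sq (by linarith)).sum_add_tsum_nat_add 2,
    Finset.sum_range_succ, Finset.sum_range_one, hterm₀, hterm₁]
  linarith
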